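/- Let m ≥ 1. For X ∈ ℍ^m and purely imaginary Z ∈ ℍ, let M(X,Z) be the (m+2)×(m+2) quaternion matrix in block form M(X,Z) = [[1 + ‖X‖²/8 + Z/2, −X*/2, ‖X‖²/8 + Z/2], [−X/2, I_m, −X/2], [−‖X‖²/8 − Z/2, X*/2, 1 − ‖X‖²/8 − Z/2]]. Then for all X₁, X₂ ∈ ℍ^m and purely imaginary Z₁, Z₂ ∈ ℍ: M(X₁,Z₁) · M(X₂,Z₂) = M(X₁ + X₂, Z₁ + Z₂ + Im(X₁*X₂)/2), where X₁*X₂ = Σⱼ (X₁)ⱼ* (X₂)ⱼ and Im(q) = (q − q*)/2. (This is the group law of the 2-step nilpotent group N̄ = exp(n̄) in exponential coordinates.) -/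

import Mathlib

open Quaternion Matrix

noncomputable section

/-- The index type for `(m+2) × (m+2)` matrices in `(1, m, 1)` block form. -/
abbrev Idx (m : ℕ) := Unit ⊕ Fin m ⊕ Unit

/-- The group element `M(X,Z)`:
`[[1 + ‖X‖²/8 + Z/2, -X*/2, ‖X‖²/8 + Z/2], [-X/2, I, -X/2],
  [-‖X‖²/8 - Z/2, X*/2, 1 - ‖X‖²/8 - Z/2]]`, where `‖X‖² = ∑ⱼ |Xⱼ|²`. -/
def matM (m : ℕ) (X : Fin m → Quaternion ℝ) (Z : Quaternion ℝ) :
    Matrix (Idx m) (Idx m) (Quaternion ℝ) :=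
  Matrix.of fun i j =>
    match i, j with
    | Sum.inl _, Sum.inl _ =>
        1 + (((∑ k, Quaternion.normSq (X k)) / 8 : ℝ) : Quaternion ℝ) + Z / 2
    | Sum.inl _, Sum.inr (Sum.inl k) => -star (X k) / 2
    | Sum.inl _, Sum.inr (Sum.inr _) =>
        (((∑ k, Quaternion.normSq (X k)) / 8 : ℝ) : Quaternion ℝ) + Z / 2
    | Sum.inr (Sum.inl k), Sum.inl _ => -X k / 2
    | Sum.inr (Sum.inl k), Sum.inr (Sum.inl l) => if k = l then 1 else 0
    | Sum.inr (Sum.inl k), Sum.inr (Sum.inr _) => -X k / 2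
    | Sum.inr (Sum.inr _), Sum.inl _ =>
        -(((∑ k, Quaternion.normSq (X k)) / 8 : ℝ) : Quaternion ℝ) - Z / 2
    | Sum.inr (Sum.inr _), Sum.inr (Sum.inl k) => star (X k) / 2
    | Sum.inr (Sum.inr _), Sum.inr (Sum.inr _) =>
        1 - (((∑ k, Quaternion.normSq (X k)) / 8 : ℝ) : Quaternion ℝ) - Z / 2

/-- The imaginary part `Im(q) = (q - q*)/2` of a quaternion. -/
def qIm (q : Quaternion ℝ) : Quaternion ℝ := (q - star q) / 2

/-! Write `M(X,Z) = U(-X/2, w(X,Z))` with `w(X,Z) = ‖X‖²/8 + Z/2`, where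
`U(x,w) = [[1 + w, x*, w], [x, I, x], [-w, -x*, 1 - w]]`. Over any ring with involution these
matrices multiply by `U(x₁,w₁) U(x₂,w₂) = U(x₁ + x₂, w₁ + w₂ + x₁*x₂)`. Since
`‖X₁ + X₂‖² = ‖X₁‖² + ‖X₂‖² + X₁*X₂ + (X₁*X₂)*`, the real part of `X₁*X₂/4` is supplied by the
norm term of `w` and its imaginary part by the correction `Im(X₁*X₂)/2` to `Z`. -/

section UnipotentBlock

variable {R n : Type*} [Ring R] [StarRing R] [Fintype n] [DecidableEq n]

def unipotentBlockMatrix (x : n → R) (w : R) :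
    Matrix (Unit ⊕ n ⊕ Unit) (Unit ⊕ n ⊕ Unit) R :=
  Matrix.of fun i j =>
    match i, j with
    | .inl _, .inl _ => 1 + w
    | .inl _, .inr (.inl l) => star (x l)
    | .inl _, .inr (.inr _) => w
    | .inr (.inl k), .inl _ => x k
    | .inr (.inl k), .inr (.inl l) => (1 : Matrix n n R) k l
    | .inr (.inl k), .inr (.inr _) => x k
    | .inr (.inr _), .inl _ => -w
    | .inr (.inr _), .inr (.inl l) => -star (x l)
    | .inr (.inr _), .inr (.inr _) => 1 - w

theorem unipotentBlockMatrix_mul (x₁ x₂ : n → R) (w₁ w₂ : R) :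
    unipotentBlockMatrix x₁ w₁ * unipotentBlockMatrix x₂ w₂ =
      unipotentBlockMatrix (x₁ + x₂) (w₁ + w₂ + star x₁ ⬝ᵥ x₂) := by
  ext (_ | k | _) (_ | l | _) : 1 <;>
    simp only [unipotentBlockMatrix, of_apply, Matrix.mul_apply, Matrix.one_apply,
      Fintype.sum_sum_type, Fintype.sum_unique, mul_ite, ite_mul, mul_one, one_mul, mul_zero,
      zero_mul, Finset.sum_ite_eq, Finset.sum_ite_eq', Finset.mem_univ, if_true, dotProduct,
      Pi.star_apply, Pi.add_apply, star_add, neg_mul, mul_neg, Finset.sum_neg_distrib] <;>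
    first | noncomm_ring | abel

end UnipotentBlock

theorem div_two_eq_smul {K A : Type*} [Field K] [DivisionRing A] [Algebra K A] (q : A) :
    q / 2 = (2⁻¹ : K) • q := by
  rw [Algebra.smul_def, Algebra.commutes, map_inv₀, map_ofNat, div_eq_mul_inv]

theorem star_add_dotProduct_add {α n : Type*} [NonUnitalSemiring α] [StarRing α] [Fintype n]
    (x y : n → α) :
    star (x + y) ⬝ᵥ (x + y) = star x ⬝ᵥ x + star y ⬝ᵥ y + (star x ⬝ᵥ y + star (star x ⬝ᵥ y)) := by
  rw [star_add, add_dotProduct, dotProduct_add, dotProduct_add, star_dotProduct y x]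
  abel

theorem Quaternion.coe_sum_normSq {R n : Type*} [CommRing R] [Fintype n] (X : n → ℍ[R]) :
    ((∑ k, normSq (X k) : R) : ℍ[R]) = star X ⬝ᵥ X := by
  rw [← Quaternion.algebraMap_def, map_sum]
  simp [dotProduct, Quaternion.algebraMap_def, Quaternion.star_mul_self]

def cornerEntry {m : ℕ} (X : Fin m → ℍ[ℝ]) (Z : ℍ[ℝ]) : ℍ[ℝ] :=
  (((∑ k, normSq (X k)) / 8 : ℝ) : ℍ[ℝ]) + Z / 2

theorem matM_eq_unipotentBlockMatrix (m : ℕ) (X : Fin m → ℍ[ℝ]) (Z : ℍ[ℝ]) :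
    matM m X Z = unipotentBlockMatrix ((-2⁻¹ : ℝ) • X) (cornerEntry X Z) := by
  ext (_ | k | _) (_ | l | _) : 1 <;>
    simp only [matM, unipotentBlockMatrix, cornerEntry, of_apply, Matrix.one_apply,
      Pi.smul_apply, div_two_eq_smul (K := ℝ), Quaternion.star_smul, star_neg, neg_smul, smul_neg] <;>
    abel

theorem cornerEntry_add {m : ℕ} (X₁ X₂ : Fin m → ℍ[ℝ]) (Z₁ Z₂ : ℍ[ℝ]) :
    cornerEntry (X₁ + X₂) (Z₁ + Z₂ + qIm (star X₁ ⬝ᵥ X₂) / 2) =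
      cornerEntry X₁ Z₁ + cornerEntry X₂ Z₂ + star ((-2⁻¹ : ℝ) • X₁) ⬝ᵥ ((-2⁻¹ : ℝ) • X₂) := by
  have hstar : star ((-2⁻¹ : ℝ) • X₁) = (-2⁻¹ : ℝ) • star X₁ :=
    funext fun k => Quaternion.star_smul _ (X₁ k)
  simp only [cornerEntry, div_eq_inv_mul (b := (8 : ℝ)), ← smul_eq_mul, coe_smul,
    coe_sum_normSq, star_add_dotProduct_add, qIm, div_two_eq_smul (K := ℝ), hstar,
    smul_dotProduct, dotProduct_smul]
  module

theorem stmt_4_general (m : ℕ) (X₁ X₂ : Fin m → Quaternion ℝ)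
    (Z₁ Z₂ : Quaternion ℝ) :
    matM m X₁ Z₁ * matM m X₂ Z₂
      = matM m (X₁ + X₂) (Z₁ + Z₂ + qIm (∑ j, star (X₁ j) * X₂ j) / 2) := by
  rw [matM_eq_unipotentBlockMatrix, matM_eq_unipotentBlockMatrix, unipotentBlockMatrix_mul,
    matM_eq_unipotentBlockMatrix, smul_add]
  exact congrArg _ (cornerEntry_add X₁ X₂ Z₁ Z₂).symm

/-- the group law of the 2-step nilpotent group `N̄` in exponential
coordinates: `M(X₁,Z₁) · M(X₂,Z₂) = M(X₁+X₂, Z₁+Z₂+Im(X₁*X₂)/2)`. -/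
theorem stmt_4 (m : ℕ) (hm : 1 ≤ m) (X₁ X₂ : Fin m → Quaternion ℝ)
    (Z₁ Z₂ : Quaternion ℝ) (hZ₁ : Z₁.re = 0) (hZ₂ : Z₂.re = 0) :
    matM m X₁ Z₁ * matM m X₂ Z₂
      = matM m (X₁ + X₂) (Z₁ + Z₂ + qIm (∑ j, star (X₁ j) * X₂ j) / 2) :=
  stmt_4_general m X₁ X₂ Z₁ Z₂
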